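/- arXiv:2512.06005 — 8 statements merged into one kernel-verified Lean document; each statement's English description precedes it below -/
import Mathlib

section
/- Let (Θ, ≲) be a nonempty partially ordered set, X a nonempty finite set, and U : X × Θ → ℝ. Then the following are equivalent: (a) for all θ ≲ θ′ in Θ, the function U(·,θ) is less risk-averse than U(·,θ′); (b) both of the following hold: (i) for all x, y ∈ X, the function θ ↦ U(y,θ) − U(x,θ) is single-crossing, and (ii) for each y ∈ X, the family of functions {θ ↦ U(y,θ) − U(x,θ) : x ∈ X} satisfies signed-ratio monotonicity. -/
open Finset

/-- A lottery on a finite set `X`: a function `p : X → [0,1]` summing to 1. -/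
def IsLottery {X : Type*} [Fintype X] (p : X → ℝ) : Prop :=
  (∀ x, 0 ≤ p x ∧ p x ≤ 1) ∧ ∑ x, p x = 1

/-- `u` is less risk-averse than `v` (Yaari). -/
def LessRiskAverse {X : Type*} [Fintype X] (u v : X → ℝ) : Prop :=
  ∀ (y : X) (p : X → ℝ), IsLottery p →
    (u y ≥ ∑ x, u x * p x → v y ≥ ∑ x, v x * p x) ∧
    (u y > ∑ x, u x * p x → v y > ∑ x, v x * p x)

/-- A function `φ : Θ → ℝ` on a poset is single-crossing. -/
def SingleCrossing {Θ : Type*} [PartialOrder Θ] (φ : Θ → ℝ) : Prop :=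
  ∀ ⦃θ θ' : Θ⦄, θ ≤ θ' → (φ θ ≥ 0 → φ θ' ≥ 0) ∧ (φ θ > 0 → φ θ' > 0)

/-- A family `Φ` of functions `Θ → ℝ` satisfies signed-ratio monotonicity. -/
def SignedRatioMonotone {Θ : Type*} [PartialOrder Θ] (Φ : Set (Θ → ℝ)) : Prop :=
  ∀ φ ∈ Φ, ∀ ψ ∈ Φ, ∀ ⦃θ θ' : Θ⦄, θ ≤ θ' →
    φ θ < 0 → 0 < ψ θ → -φ θ * ψ θ' ≥ -φ θ' * ψ θ

/-!
Write `φₓ = U(y,·) - U(x,·)`. For a lottery `p`, `U(y,θ) - ∑ₓ U(x,θ) p(x) = ∑ₓ p(x) φₓ(θ)`, and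
single-crossing is invariant under positive scaling, so (a) says that every nonnegative
combination of the `φₓ` is single-crossing. Point masses give (i), and the combination
`φⱼ(θ) φᵢ - φᵢ(θ) φⱼ`, which vanishes at `θ`, gives (ii). Conversely, for `θ ≤ θ'`, (ii) puts the
ratios `φₓ(θ') / φₓ(θ)` of the members negative at `θ` below those of the members positive at `θ`,
which are positive by (i). A positive `λ` between them satisfies `λ φₓ(θ) ≤ φₓ(θ')` for every `x`
(for `φₓ(θ) = 0` by (i)), hence `λ S(θ) ≤ S(θ')` for every nonnegative combination `S`.
-/

section SingleCrossing

variable {Θ : Type*} [PartialOrder Θ]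

lemma SingleCrossing.const_mul {φ : Θ → ℝ} (hφ : SingleCrossing φ) {a : ℝ} (ha : 0 < a) :
    SingleCrossing fun θ => a * φ θ := by
  intro θ θ' h
  simp only [ge_iff_le, gt_iff_lt, mul_nonneg_iff_of_pos_left ha, mul_pos_iff_of_pos_left ha]
  exact hφ h

lemma singleCrossing_zero : SingleCrossing fun _ : Θ => (0 : ℝ) :=
  fun _ _ _ => ⟨fun _ => le_rfl, id⟩

lemma exists_pos_between_of_finite {A B : Set ℝ} (hA : A.Finite) (hB : B.Finite)
    (hB_pos : ∀ b ∈ B, 0 < b) (hAB : ∀ a ∈ A, ∀ b ∈ B, a ≤ b) :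
    ∃ l > 0, (∀ a ∈ A, a ≤ l) ∧ ∀ b ∈ B, l ≤ b := by
  rcases B.eq_empty_or_nonempty with rfl | hne
  · obtain ⟨M, hM⟩ := hA.bddAbove
    exact ⟨max M 1, by positivity, fun a ha => (hM ha).trans (le_max_left _ _), by simp⟩
  · obtain ⟨b₀, hb₀, hmin⟩ := B.exists_min_image id hB hne
    exact ⟨b₀, hB_pos b₀ hb₀, fun a ha => hAB a ha b₀ hb₀, hmin⟩

variable {ι : Type*} {φ : ι → Θ → ℝ}

lemma SignedRatioMonotone.div_le_div (h : SignedRatioMonotone (Set.range φ)) {i j : ι}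
    {θ θ' : Θ} (hθ : θ ≤ θ') (hi : φ i θ < 0) (hj : 0 < φ j θ) :
    φ i θ' / φ i θ ≤ φ j θ' / φ j θ := by
  have := h _ ⟨i, rfl⟩ _ ⟨j, rfl⟩ hθ hi hj
  rw [div_le_iff_of_neg hi, div_mul_eq_mul_div, div_le_iff₀ hj]
  linarith

lemma exists_pos_mul_le_of_signedRatioMonotone [Finite ι] (hsc : ∀ i, SingleCrossing (φ i))
    (hsrm : SignedRatioMonotone (Set.range φ)) {θ θ' : Θ} (hθ : θ ≤ θ') :
    ∃ l > 0, ∀ i, l * φ i θ ≤ φ i θ' := by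
  set r : ι → ℝ := fun i => φ i θ' / φ i θ
  obtain ⟨l, hl, hneg, hpos⟩ := exists_pos_between_of_finite
    (Set.toFinite (r '' {i | φ i θ < 0})) (Set.toFinite (r '' {i | 0 < φ i θ}))
    (by rintro _ ⟨j, hj, rfl⟩; exact div_pos ((hsc j hθ).2 hj) hj)
    (by rintro _ ⟨i, hi, rfl⟩ _ ⟨j, hj, rfl⟩; exact hsrm.div_le_div hθ hi hj)
  refine ⟨l, hl, fun i => ?_⟩
  rcases lt_trichotomy (φ i θ) 0 with hi | hi | hi
  · exact (div_le_iff_of_neg hi).mp (hneg _ ⟨i, hi, rfl⟩)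
  · simpa [hi] using (hsc i hθ).1 hi.ge
  · exact (le_div_iff₀ hi).mp (hpos _ ⟨i, hi, rfl⟩)

variable [Fintype ι]

lemma SingleCrossing.sum_mul (hsc : ∀ i, SingleCrossing (φ i))
    (hsrm : SignedRatioMonotone (Set.range φ)) {c : ι → ℝ} (hc : 0 ≤ c) :
    SingleCrossing fun θ => ∑ i, c i * φ i θ := by
  intro θ θ' hθ
  obtain ⟨l, hl, hle⟩ := exists_pos_mul_le_of_signedRatioMonotone hsc hsrm hθ
  have hsum : l * ∑ i, c i * φ i θ ≤ ∑ i, c i * φ i θ' := by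
    rw [mul_sum]
    refine sum_le_sum fun i _ => ?_
    calc l * (c i * φ i θ) = c i * (l * φ i θ) := by ring
      _ ≤ c i * φ i θ' := mul_le_mul_of_nonneg_left (hle i) (hc i)
  exact ⟨fun h => (mul_nonneg hl.le h).trans hsum, fun h => (mul_pos hl h).trans_le hsum⟩

theorem singleCrossing_sum_mul_iff :
    (∀ c : ι → ℝ, 0 ≤ c → SingleCrossing fun θ => ∑ i, c i * φ i θ) ↔
      (∀ i, SingleCrossing (φ i)) ∧ SignedRatioMonotone (Set.range φ) := by
  classical
  refine ⟨fun h => ⟨fun i => ?_, ?_⟩, fun h c hc => SingleCrossing.sum_mul h.1 h.2 hc⟩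
  · simpa [Pi.single_apply] using h (Pi.single i 1) (by simp)
  · rintro _ ⟨i, rfl⟩ _ ⟨j, rfl⟩ θ θ' hθ hi hj
    have := (h (Pi.single i (φ j θ) + Pi.single j (-φ i θ))
      (add_nonneg (by simpa using hj.le) (by simpa using hi.le)) hθ).1
    simp only [Pi.add_apply, Pi.single_apply, add_mul, ite_mul, zero_mul, neg_mul,
      sum_add_distrib, sum_ite_eq', mem_univ, if_true, ge_iff_le, le_add_neg_iff_add_le,
      zero_add] at this
    linarith [this (mul_comm _ _).le]

end SingleCrossing

section Lottery

variable {X : Type*} [Fintype X] {p : X → ℝ}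

lemma IsLottery.sub_sum_mul (hp : IsLottery p) (u : X → ℝ) (y : X) :
    u y - ∑ x, u x * p x = ∑ x, p x * (u y - u x) := by
  calc u y - ∑ x, u x * p x = (∑ x, p x) * u y - ∑ x, u x * p x := by rw [hp.2, one_mul]
    _ = ∑ x, p x * (u y - u x) := by
      rw [sum_mul, ← sum_sub_distrib]
      exact sum_congr rfl fun x _ => by ring

lemma isLottery_inv_mul {c : X → ℝ} (hc : 0 ≤ c) (ht : 0 < ∑ x, c x) :
    IsLottery fun x => (∑ y, c y)⁻¹ * c x := by
  refine ⟨fun x => ⟨mul_nonneg (inv_nonneg.mpr ht.le) (hc x), ?_⟩, ?_⟩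
  · exact inv_mul_le_one_of_le₀ (single_le_sum (fun i _ => hc i) (mem_univ x)) ht.le
  · rw [← mul_sum, inv_mul_cancel₀ ht.ne']

variable {Θ : Type*} [PartialOrder Θ]

lemma forall_isLottery_singleCrossing_iff (φ : X → Θ → ℝ) :
    (∀ p : X → ℝ, IsLottery p → SingleCrossing fun θ => ∑ x, p x * φ x θ) ↔
      ∀ c : X → ℝ, 0 ≤ c → SingleCrossing fun θ => ∑ x, c x * φ x θ := by
  refine ⟨fun h c hc => ?_, fun h p hp => h p fun x => (hp.1 x).1⟩
  rcases (sum_nonneg fun x _ => hc x : 0 ≤ ∑ x, c x).eq_or_lt with h0 | hpos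
  · have hc0 := (sum_eq_zero_iff_of_nonneg fun x _ => hc x).mp h0.symm
    simpa [hc0] using singleCrossing_zero
  · have := (h _ (isLottery_inv_mul hc hpos)).const_mul hpos
    simpa [mul_sum, ← mul_assoc, mul_inv_cancel₀ hpos.ne'] using this

lemma lessRiskAverse_iff {u v : X → ℝ} :
    LessRiskAverse u v ↔ ∀ y p, IsLottery p →
      (0 ≤ ∑ x, p x * (u y - u x) → 0 ≤ ∑ x, p x * (v y - v x)) ∧
        (0 < ∑ x, p x * (u y - u x) → 0 < ∑ x, p x * (v y - v x)) := by
  refine forall₂_congr fun y p => forall_congr' fun hp => ?_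
  rw [← hp.sub_sum_mul, ← hp.sub_sum_mul]
  simp only [ge_iff_le, gt_iff_lt, sub_nonneg, sub_pos]

lemma forall_lessRiskAverse_iff (u : Θ → X → ℝ) :
    (∀ θ θ', θ ≤ θ' → LessRiskAverse (u θ) (u θ')) ↔
      ∀ y p, IsLottery p → SingleCrossing fun θ => ∑ x, p x * (u θ y - u θ x) := by
  simp only [lessRiskAverse_iff]
  exact ⟨fun h y p hp θ θ' hθ => h θ θ' hθ y p hp, fun h θ θ' hθ y p hp => h y p hp hθ⟩

end Lottery

theorem stmt_0_general {Θ X : Type*} [PartialOrder Θ] [Fintype X]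
    (U : X × Θ → ℝ) :
    (∀ θ θ' : Θ, θ ≤ θ' →
        LessRiskAverse (fun x => U (x, θ)) (fun x => U (x, θ'))) ↔
      ((∀ x y : X, SingleCrossing (fun θ => U (y, θ) - U (x, θ))) ∧
        (∀ y : X, SignedRatioMonotone
          {φ : Θ → ℝ | ∃ x : X, φ = fun θ => U (y, θ) - U (x, θ)})) := by
  have hrange (y : X) : {φ : Θ → ℝ | ∃ x : X, φ = fun θ => U (y, θ) - U (x, θ)} =
      Set.range fun x θ => U (y, θ) - U (x, θ) := by
    simp only [Set.range, eq_comm]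
  calc _ ↔ ∀ y p, IsLottery p → SingleCrossing fun θ => ∑ x, p x * (U (y, θ) - U (x, θ)) :=
        forall_lessRiskAverse_iff fun θ x => U (x, θ)
    _ ↔ ∀ y (c : X → ℝ), 0 ≤ c → SingleCrossing fun θ => ∑ x, c x * (U (y, θ) - U (x, θ)) :=
        forall_congr' fun y => forall_isLottery_singleCrossing_iff _
    _ ↔ ∀ y, (∀ x, SingleCrossing fun θ => U (y, θ) - U (x, θ)) ∧
          SignedRatioMonotone (Set.range fun x θ => U (y, θ) - U (x, θ)) :=
        forall_congr' fun y => singleCrossing_sum_mul_iff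
    _ ↔ _ := by rw [forall_and, forall_comm]; simp only [hrange]

theorem stmt_0 {Θ X : Type*} [PartialOrder Θ] [Nonempty Θ] [Fintype X] [Nonempty X]
    (U : X × Θ → ℝ) :
    (∀ θ θ' : Θ, θ ≤ θ' →
        LessRiskAverse (fun x => U (x, θ)) (fun x => U (x, θ'))) ↔
      ((∀ x y : X, SingleCrossing (fun θ => U (y, θ) - U (x, θ))) ∧
        (∀ y : X, SignedRatioMonotone
          {φ : Θ → ℝ | ∃ x : X, φ = fun θ => U (y, θ) - U (x, θ)})) :=
  stmt_0_general U
end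

section
/- Let (Θ, ≲) be a nonempty partially ordered set, X a nonempty finite set, and U : X × Θ → ℝ. If for all θ ≲ θ′ in Θ the function U(·,θ) is less risk-averse than U(·,θ′), then (i) for all x, y ∈ X the function θ ↦ U(y,θ) − U(x,θ) is single-crossing, and (ii) for each y ∈ X the family {θ ↦ U(y,θ) − U(x,θ) : x ∈ X} satisfies signed-ratio monotonicity. -/
open Finset

/-!
Against the degenerate lottery on `x`, the hypothesis says that `U(y,θ) ≥ U(x,θ)` (resp. `>`)
persists as `θ` increases, which is (i). For (ii), if `U(x₂,θ) ≤ U(y,θ) ≤ U(x₁,θ)`, then `y` is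
`U(·,θ)`-indifferent to the mixture of `x₁` and `x₂` with weights proportional to
`U(y,θ) - U(x₂,θ)` and `U(x₁,θ) - U(y,θ)`; so `U(·,θ')` weakly prefers `y` to that mixture, and
clearing denominators is exactly the signed-ratio inequality.
-/

section Lottery

variable {X : Type*} [Fintype X] [DecidableEq X]

theorem isLottery_pi_single (a : X) : IsLottery (Pi.single a (1 : ℝ)) := by
  refine ⟨fun x => ?_, by simp⟩
  rcases eq_or_ne x a with rfl | hx <;> simp [*]

omit [DecidableEq X] in
theorem IsLottery.convex_comb {p q : X → ℝ} (hp : IsLottery p) (hq : IsLottery q) {t : ℝ}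
    (ht₀ : 0 ≤ t) (ht₁ : t ≤ 1) : IsLottery (t • p + (1 - t) • q) := by
  refine ⟨fun x => ?_, ?_⟩
  · obtain ⟨⟨hp₀, hp₁⟩, hq₀, hq₁⟩ := And.intro (hp.1 x) (hq.1 x)
    simp only [Pi.add_apply, Pi.smul_apply, smul_eq_mul]
    constructor <;> nlinarith
  · simp [sum_add_distrib, ← mul_sum, hp.2, hq.2]

theorem sum_mul_pi_single (u : X → ℝ) (a : X) : ∑ x, u x * (Pi.single a 1 : X → ℝ) x = u a := by
  simp [Pi.single_apply]

omit [DecidableEq X] in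
theorem sum_mul_convex_comb (u p q : X → ℝ) (t : ℝ) :
    ∑ x, u x * (t • p + (1 - t) • q) x
      = t * ∑ x, u x * p x + (1 - t) * ∑ x, u x * q x := by
  simp only [Pi.add_apply, Pi.smul_apply, smul_eq_mul, mul_sum, ← sum_add_distrib]
  exact sum_congr rfl fun _ _ => by ring

end Lottery

namespace LessRiskAverse

variable {X : Type*} [Fintype X] {u v : X → ℝ}

theorem le_of_le (h : LessRiskAverse u v) {x y : X} (hxy : u x ≤ u y) : v x ≤ v y := by
  classical
  have := (h y _ (isLottery_pi_single x)).1
  simp only [sum_mul_pi_single] at this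
  exact this hxy

theorem lt_of_lt (h : LessRiskAverse u v) {x y : X} (hxy : u x < u y) : v x < v y := by
  classical
  have := (h y _ (isLottery_pi_single x)).2
  simp only [sum_mul_pi_single] at this
  exact this hxy

theorem mul_sub_le_mul_sub (h : LessRiskAverse u v) {x₁ x₂ y : X}
    (h₂ : u x₂ ≤ u y) (h₁ : u y ≤ u x₁) :
    (u y - u x₂) * (v x₁ - v y) ≤ (u x₁ - u y) * (v y - v x₂) := by
  classical
  rcases (h₂.trans h₁).eq_or_lt with h₂₁ | h₂₁
  · have hy₂ : u y = u x₂ := by linarith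
    have hy₁ : u x₁ = u y := by linarith
    simp [hy₂, hy₁]
  set t := (u y - u x₂) / (u x₁ - u x₂)
  have hd : 0 < u x₁ - u x₂ := sub_pos.2 h₂₁
  have ht₀ : 0 ≤ t := div_nonneg (by linarith) hd.le
  have ht₁ : t ≤ 1 := (div_le_one hd).2 (by linarith)
  have hlot := (isLottery_pi_single x₁).convex_comb (isLottery_pi_single x₂) ht₀ ht₁
  have hind : u y = t * u x₁ + (1 - t) * u x₂ := by
    simp only [t]; field_simp; ring
  have hv := (h y _ hlot).1
  simp only [sum_mul_convex_comb, sum_mul_pi_single] at hv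
  have hv := mul_le_mul_of_nonneg_left (hv hind.ge) hd.le
  have key : (u x₁ - u x₂) * (t * v x₁ + (1 - t) * v x₂)
      = (u y - u x₂) * v x₁ + (u x₁ - u y) * v x₂ := by
    simp only [t]; field_simp; ring
  linarith

end LessRiskAverse

theorem stmt_1_general {Θ X : Type*} [PartialOrder Θ] [Fintype X]
    (U : X × Θ → ℝ)
    (h : ∀ θ θ' : Θ, θ ≤ θ' →
      LessRiskAverse (fun x => U (x, θ)) (fun x => U (x, θ'))) :
    (∀ x y : X, SingleCrossing (fun θ => U (y, θ) - U (x, θ))) ∧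
      (∀ y : X, SignedRatioMonotone
        {φ : Θ → ℝ | ∃ x : X, φ = fun θ => U (y, θ) - U (x, θ)}) := by
  refine ⟨fun x y θ θ' hθ => ?_, ?_⟩
  · simp only [ge_iff_le, gt_iff_lt, sub_nonneg, sub_pos]
    exact ⟨(h θ θ' hθ).le_of_le, (h θ θ' hθ).lt_of_lt⟩
  · rintro y _ ⟨x₁, rfl⟩ _ ⟨x₂, rfl⟩ θ θ' hθ h₁ h₂
    have key := (h θ θ' hθ).mul_sub_le_mul_sub (x₁ := x₁) (x₂ := x₂) (y := y)
      (by linarith) (by linarith)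
    linear_combination key

theorem stmt_1 {Θ X : Type*} [PartialOrder Θ] [Nonempty Θ] [Fintype X] [Nonempty X]
    (U : X × Θ → ℝ)
    (h : ∀ θ θ' : Θ, θ ≤ θ' →
      LessRiskAverse (fun x => U (x, θ)) (fun x => U (x, θ'))) :
    (∀ x y : X, SingleCrossing (fun θ => U (y, θ) - U (x, θ))) ∧
      (∀ y : X, SignedRatioMonotone
        {φ : Θ → ℝ | ∃ x : X, φ = fun θ => U (y, θ) - U (x, θ)}) :=
  stmt_1_general U h
end

section
/- Let X be a nonempty finite set and u, v : X → ℝ. Then u is less risk-averse than v if and only if both of the following hold: (I) for any x, y ∈ X, u(x) ≥ u(y) implies v(x) ≥ v(y), and u(x) > u(y) implies v(x) > v(y); (II) for any x, y, z ∈ X with u(x) < u(y) < u(z), one has (u(z) − u(y))/(u(y) − u(x)) ≥ (v(z) − v(y))/(v(y) − v(x)). -/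
open Finset

/-!
Condition (I) is the definition tested on point masses, and (II) on the two-point
lottery on `x` and `z` whose `u`-expectation is `u y`. Conversely, (I) and (II) say that `v` is an
increasing concave function of `u`, so at every `y` it admits a supporting line of positive slope
`c`: `v x - v y ≤ c * (u x - u y)` for all `x`. Taking expectations under `p` gives
`𝔼 v - v y ≤ c * (𝔼 u - u y)`, from which both implications follow.
-/

section Lottery

variable {X : Type*} [Fintype X]

theorem isLottery_iff_mem_stdSimplex {p : X → ℝ} : IsLottery p ↔ p ∈ stdSimplex ℝ X :=
  ⟨fun hp => ⟨fun x => (hp.1 x).1, hp.2⟩,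
    fun hp => ⟨fun x => mem_Icc_of_mem_stdSimplex hp x, hp.2⟩⟩

theorem sum_mul_single [DecidableEq X] (w : X → ℝ) (y : X) :
    ∑ x, w x * (Pi.single y 1 : X → ℝ) x = w y := by
  simp [Pi.single_apply]

theorem sum_mul_convexComb (w p q : X → ℝ) (s t : ℝ) :
    ∑ x, w x * (s • p + t • q) x = s * ∑ x, w x * p x + t * ∑ x, w x * q x := by
  simp only [Pi.add_apply, Pi.smul_apply, smul_eq_mul, mul_sum, ← sum_add_distrib]
  exact sum_congr rfl fun x _ => by ring

theorem IsLottery.sum_sub_mul {p : X → ℝ} (hp : IsLottery p) (w : X → ℝ) (c : ℝ) :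
    ∑ x, (w x - c) * p x = ∑ x, w x * p x - c := by
  simp [sub_mul, sum_sub_distrib, ← mul_sum, hp.2]

end Lottery

section RiskAversion

variable {X : Type*} [Fintype X] {u v : X → ℝ}

theorem LessRiskAverse.same_order (h : LessRiskAverse u v) (x y : X) :
    (u x ≥ u y → v x ≥ v y) ∧ (u x > u y → v x > v y) := by
  classical
  simpa only [sum_mul_single] using
    h x _ (isLottery_iff_mem_stdSimplex.mpr (single_mem_stdSimplex ℝ y))

theorem LessRiskAverse.ratio_ge (h : LessRiskAverse u v) {x y z : X}
    (hxy : u x < u y) (hyz : u y < u z) :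
    (u z - u y) / (u y - u x) ≥ (v z - v y) / (v y - v x) := by
  classical
  set t := (u y - u x) / (u z - u x)
  have ht : t * (u z - u x) = u y - u x := div_mul_cancel₀ _ (by linarith)
  have ht₀ : 0 ≤ t := div_nonneg (by linarith) (by linarith)
  have ht₁ : t ≤ 1 := (div_le_one (by linarith)).mpr (by linarith)
  have hp : IsLottery (t • Pi.single z 1 + (1 - t) • Pi.single x 1) :=
    isLottery_iff_mem_stdSimplex.mpr <| convex_stdSimplex ℝ X (single_mem_stdSimplex ℝ z)
      (single_mem_stdSimplex ℝ x) ht₀ (by linarith) (by ring)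
  have hv := (h y _ hp).1
  simp only [sum_mul_convexComb, sum_mul_single] at hv
  have hv' := mul_le_mul_of_nonneg_right (hv (by linarith)) (by linarith : 0 ≤ u z - u x)
  have hvxy := (h.same_order y x).2 hxy
  rw [ge_iff_le, div_le_div_iff₀ (by linarith) (by linarith),
    show u y - u x = t * (u z - u x) from ht.symm,
    show u z - u y = (1 - t) * (u z - u x) by linarith]
  linarith

theorem Finset.exists_gt_between_of_forall_le {α : Type*} [LinearOrder α] [NoMaxOrder α]
    {m : α} {A B : Finset α} (hA : ∀ a ∈ A, m < a) (hB : ∀ b ∈ B, m < b)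
    (hAB : ∀ a ∈ A, ∀ b ∈ B, a ≤ b) : ∃ c, m < c ∧ (∀ a ∈ A, a ≤ c) ∧ ∀ b ∈ B, c ≤ b := by
  rcases A.eq_empty_or_nonempty with rfl | hne
  · obtain ⟨c₀, hc₀⟩ := exists_gt m
    refine ⟨(insert c₀ B).min' (insert_nonempty c₀ B), ?_, by simp,
      fun b hb => min'_le _ _ (mem_insert_of_mem hb)⟩
    exact (lt_min'_iff _ _).mpr ((forall_mem_insert _ _ _).mpr ⟨hc₀, hB⟩)
  · exact ⟨A.max' hne, hA _ (A.max'_mem hne), A.le_max', fun b hb =>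
      A.max'_le hne _ fun a ha => hAB a ha b hb⟩

theorem exists_pos_supporting_slope
    (hI : ∀ x y : X, (u x ≥ u y → v x ≥ v y) ∧ (u x > u y → v x > v y))
    (hII : ∀ x y z : X, u x < u y → u y < u z →
      (u z - u y) / (u y - u x) ≥ (v z - v y) / (v y - v x)) (y : X) :
    ∃ c, 0 < c ∧ ∀ x, v x - v y ≤ c * (u x - u y) := by
  classical
  set slope := fun x => (v x - v y) / (u x - u y)
  have slope_pos : ∀ x, u x ≠ u y → 0 < slope x := by
    intro x hx
    rcases hx.lt_or_gt with hlt | hgt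
    · exact div_pos_of_neg_of_neg (by linarith [(hI y x).2 hlt]) (by linarith)
    · exact div_pos (by linarith [(hI x y).2 hgt]) (by linarith)
  obtain ⟨c, hc, habove, hbelow⟩ := exists_gt_between_of_forall_le
    (A := (univ.filter fun z => u y < u z).image slope)
    (B := (univ.filter fun x => u x < u y).image slope)
    (by simpa using fun z hz => slope_pos z hz.ne')
    (by simpa using fun x hx => slope_pos x hx.ne)
    (by
      -- (II), cross-multiplied: chord slopes of `v` against `u` decrease from left of `y` to right.
      simp only [mem_image, mem_filter, mem_univ, true_and, forall_exists_index, and_imp]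
      rintro _ z hz rfl _ x hx rfl
      have h := hII x y z hx hz
      have hvxy := (hI y x).2 hx
      rw [ge_iff_le, div_le_div_iff₀ (by linarith) (by linarith)] at h
      have hslope_x : slope x = (v y - v x) / (u y - u x) := by
        rw [← neg_div_neg_eq, neg_sub, neg_sub]
      rw [hslope_x, div_le_div_iff₀ (by linarith) (by linarith)]
      linarith)
  refine ⟨c, hc, fun x => ?_⟩
  rcases lt_trichotomy (u x) (u y) with hlt | heq | hgt
  · have := hbelow _ (mem_image_of_mem slope (by simpa using hlt))
    rwa [le_div_iff_of_neg (by linarith)] at this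
  · have hv : v x = v y := le_antisymm ((hI y x).1 heq.le) ((hI x y).1 heq.ge)
    simp [hv, heq]
  · have := habove _ (mem_image_of_mem slope (by simpa using hgt))
    rwa [div_le_iff₀ (by linarith)] at this

theorem lessRiskAverse_of_supporting_slope
    (h : ∀ y, ∃ c, 0 < c ∧ ∀ x, v x - v y ≤ c * (u x - u y)) : LessRiskAverse u v := by
  intro y p hp
  obtain ⟨c, hc, hsupp⟩ := h y
  have key : ∑ x, v x * p x - v y ≤ c * (∑ x, u x * p x - u y) := by
    rw [← hp.sum_sub_mul, ← hp.sum_sub_mul, mul_sum]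
    refine sum_le_sum fun x _ => ?_
    rw [← mul_assoc]
    exact mul_le_mul_of_nonneg_right (hsupp x) (hp.1 x).1
  exact ⟨fun hu => by linarith [mul_nonpos_of_nonneg_of_nonpos hc.le (sub_nonpos.mpr hu)],
    fun hu => by linarith [mul_neg_of_pos_of_neg hc (sub_neg.mpr hu)]⟩

end RiskAversion

theorem stmt_6_general {X : Type*} [Fintype X] (u v : X → ℝ) :
    LessRiskAverse u v ↔
      ((∀ x y : X, (u x ≥ u y → v x ≥ v y) ∧ (u x > u y → v x > v y)) ∧
        (∀ x y z : X, u x < u y → u y < u z →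
          (u z - u y) / (u y - u x) ≥ (v z - v y) / (v y - v x))) :=
  ⟨fun h => ⟨h.same_order, fun _ _ _ => h.ratio_ge⟩,
    fun ⟨hI, hII⟩ => lessRiskAverse_of_supporting_slope (exists_pos_supporting_slope hI hII)⟩

theorem stmt_6 {X : Type*} [Fintype X] [Nonempty X] (u v : X → ℝ) :
    LessRiskAverse u v ↔
      ((∀ x y : X, (u x ≥ u y → v x ≥ v y) ∧ (u x > u y → v x > v y)) ∧
        (∀ x y z : X, u x < u y → u y < u z →
          (u z - u y) / (u y - u x) ≥ (v z - v y) / (v y - v x))) :=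
  stmt_6_general u v
end

section
/- Let X be a nonempty finite set and u, v : X → ℝ. Suppose there exists a convex, monotone increasing function φ from the convex hull of v(X) to ℝ which is strictly increasing on v(X) and satisfies u(x) = φ(v(x)) for every x ∈ X. Then: (I) for any x, y ∈ X, u(x) ≥ u(y) implies v(x) ≥ v(y), and u(x) > u(y) implies v(x) > v(y); and (II) for any x, y, z ∈ X with u(x) < u(y) < u(z), (u(z) − u(y))/(u(y) − u(x)) ≥ (v(z) − v(y))/(v(y) − v(x)). -/
open Finset

theorem ConvexOn.sub_div_sub_le_sub_div_sub {s : Set ℝ} {f : ℝ → ℝ} (hf : ConvexOn ℝ s f)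
    {x y z : ℝ} (hx : x ∈ s) (hz : z ∈ s) (hxy : x < y) (hyz : y < z) (hfxy : f x < f y) :
    (z - y) / (y - x) ≤ (f z - f y) / (f y - f x) := by
  have hslope := hf.slope_mono_adjacent hx hz hxy hyz
  rw [div_le_div_iff₀ (sub_pos.2 hxy) (sub_pos.2 hyz)] at hslope
  rw [div_le_div_iff₀ (sub_pos.2 hxy) (sub_pos.2 hfxy)]
  linarith

theorem stmt_8_general {X : Type*} (u v : X → ℝ)
    (φ : ℝ → ℝ)
    (hconv : ConvexOn ℝ (convexHull ℝ (Set.range v)) φ)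
    (hstrict : StrictMonoOn φ (Set.range v))
    (hcomp : ∀ x : X, u x = φ (v x)) :
    (∀ x y : X, (u x ≥ u y → v x ≥ v y) ∧ (u x > u y → v x > v y)) ∧
      (∀ x y z : X, u x < u y → u y < u z →
        (u z - u y) / (u y - u x) ≥ (v z - v y) / (v y - v x)) := by
  have hu_le_iff (x y : X) : u x ≤ u y ↔ v x ≤ v y := by
    simpa only [hcomp] using hstrict.le_iff_le (Set.mem_range_self x) (Set.mem_range_self y)
  have hu_lt_iff (x y : X) : u x < u y ↔ v x < v y := by
    simpa only [hcomp] using hstrict.lt_iff_lt (Set.mem_range_self x) (Set.mem_range_self y)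
  refine ⟨fun x y => ⟨(hu_le_iff y x).1, (hu_lt_iff y x).1⟩, fun x y z hxy hyz => ?_⟩
  have hmem (w : X) : v w ∈ convexHull ℝ (Set.range v) :=
    subset_convexHull ℝ _ (Set.mem_range_self w)
  simpa only [hcomp] using hconv.sub_div_sub_le_sub_div_sub (hmem x) (hmem z)
    ((hu_lt_iff x y).1 hxy) ((hu_lt_iff y z).1 hyz) (by simpa only [hcomp] using hxy)

theorem stmt_8 {X : Type*} [Fintype X] [Nonempty X] (u v : X → ℝ)
    (φ : ℝ → ℝ)
    (hconv : ConvexOn ℝ (convexHull ℝ (Set.range v)) φ)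
    (hmono : MonotoneOn φ (convexHull ℝ (Set.range v)))
    (hstrict : StrictMonoOn φ (Set.range v))
    (hcomp : ∀ x : X, u x = φ (v x)) :
    (∀ x y : X, (u x ≥ u y → v x ≥ v y) ∧ (u x > u y → v x > v y)) ∧
      (∀ x y z : X, u x < u y → u y < u z →
        (u z - u y) / (u y - u x) ≥ (v z - v y) / (v y - v x)) :=
  stmt_8_general u v φ hconv hstrict hcomp
end

section
/- Let (Θ, ≲) be a nonempty partially ordered set, X a nonempty finite set, and f : X × Θ → ℝ. Then the following are equivalent: (A) for each lottery p ∈ Δ(X), the map θ ↦ ∑_{x∈X} f(x,θ)·p(x) is single-crossing; (B) both of the following hold: (I) for each x ∈ X, the function f(x,·) is single-crossing, and (II) the family {f(x,·) : x ∈ X} satisfies signed-ratio monotonicity. -/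
open Finset

/-!
Fix `θ ≤ θ'` and write `a = f(·, θ)`, `b = f(·, θ')`. Testing (A) on lotteries supported on at
most two outcomes gives (I) (a degenerate lottery) and (II) (the two-point lottery making the
expectation of `a` vanish). Conversely, if some `a y` is positive, take the outcome minimising
`b y / a y` among those with `a y > 0` and let `c > 0` be that ratio: (I) and (II) give
`c * a ≤ b` pointwise, so `c * ∑ a p ≤ ∑ b p`, which transfers the sign. If no `a y` is positive,
`∑ a p ≥ 0` forces `a y = 0` wherever `p y > 0`, and (I) concludes.
-/

def SignPreserving (s t : ℝ) : Prop :=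
  (s ≥ 0 → t ≥ 0) ∧ (s > 0 → t > 0)

theorem singleCrossing_iff {Θ : Type*} [PartialOrder Θ] (φ : Θ → ℝ) :
    SingleCrossing φ ↔ ∀ θ θ', θ ≤ θ' → SignPreserving (φ θ) (φ θ') :=
  Iff.rfl

theorem signedRatioMonotone_setOf_eq_iff {Θ ι : Type*} [PartialOrder Θ] (g : ι → Θ → ℝ) :
    SignedRatioMonotone {φ : Θ → ℝ | ∃ i, φ = g i} ↔
      ∀ θ θ', θ ≤ θ' → ∀ i j, g i θ < 0 → 0 < g j θ → -g i θ * g j θ' ≥ -g i θ' * g j θ := by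
  constructor
  · intro h θ θ' hθ i j
    exact h _ ⟨i, rfl⟩ _ ⟨j, rfl⟩ hθ
  · rintro h _ ⟨i, rfl⟩ _ ⟨j, rfl⟩ θ θ' hθ
    exact h θ θ' hθ i j

theorem SignPreserving.of_mul_le {s t c : ℝ} (hc : 0 < c) (h : c * s ≤ t) :
    SignPreserving s t :=
  ⟨fun hs => (mul_nonneg hc.le hs).trans h, fun hs => (mul_pos hc hs).trans_le h⟩

section Lottery

variable {X : Type*} [Fintype X] [DecidableEq X]

theorem isLottery_single_add_single (x y : X) {s t : ℝ} (hs : 0 ≤ s) (ht : 0 ≤ t)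
    (hst : s + t = 1) : IsLottery (Pi.single x s + Pi.single y t) := by
  refine ⟨fun z => ?_, ?_⟩
  · simp only [Pi.add_apply, Pi.single_apply]
    constructor
    · positivity
    · split_ifs <;> linarith
  · simp only [Pi.add_apply, Finset.sum_add_distrib, Finset.sum_pi_single', Finset.mem_univ,
      if_true, hst]

theorem sum_mul_single_add_single (a : X → ℝ) (x y : X) (s t : ℝ) :
    ∑ z, a z * (Pi.single x s + Pi.single y t : X → ℝ) z = a x * s + a y * t := by
  simp [mul_add, Finset.sum_add_distrib, Pi.single_apply]

end Lottery

section Pair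

variable {X : Type*} [Fintype X] {a b : X → ℝ}

theorem signPreserving_of_forall_lottery
    (h : ∀ p, IsLottery p → SignPreserving (∑ x, a x * p x) (∑ x, b x * p x)) (x : X) :
    SignPreserving (a x) (b x) := by
  classical
  simpa only [sum_mul_single_add_single, mul_one, mul_zero, add_zero] using
    h _ (isLottery_single_add_single x x zero_le_one le_rfl (add_zero (1 : ℝ)))

theorem signedRatio_of_forall_lottery
    (h : ∀ p, IsLottery p → SignPreserving (∑ x, a x * p x) (∑ x, b x * p x))
    {x y : X} (hx : a x < 0) (hy : 0 < a y) : -a x * b y ≥ -b x * a y := by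
  classical
  have hD : 0 < a y - a x := by linarith
  -- the weights `a y / D` on `x` and `-a x / D` on `y` make the expectation of `a` vanish
  have hp := isLottery_single_add_single x y (s := a y / (a y - a x)) (t := -a x / (a y - a x))
    (by positivity) (div_nonneg (by linarith) hD.le) (by field_simp; ring)
  have hb := (h _ hp).1
  simp only [sum_mul_single_add_single] at hb
  have ha : a x * (a y / (a y - a x)) + a y * (-a x / (a y - a x)) = 0 := by
    field_simp; ring
  have hb' : 0 ≤ (b x * a y - b y * a x) / (a y - a x) := by
    convert hb ha.ge using 1
    ring
  have := (div_nonneg_iff.mp hb').resolve_right (fun h => absurd h.2 (not_le.mpr hD))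
  linarith [this.1]

section Converse

variable (hpt : ∀ x, SignPreserving (a x) (b x))
  (hsr : ∀ x y, a x < 0 → 0 < a y → -a x * b y ≥ -b x * a y)
include hpt hsr

theorem exists_pos_mul_le_of_signedRatio (hpos : ∃ y, 0 < a y) :
    ∃ c > 0, ∀ x, c * a x ≤ b x := by
  classical
  obtain ⟨y, hy, hmin⟩ := Finset.exists_min_image {y | 0 < a y} (fun y => b y / a y)
    (by obtain ⟨y, hy⟩ := hpos; exact ⟨y, by simpa using hy⟩)
  rw [Finset.mem_filter_univ] at hy
  refine ⟨b y / a y, div_pos ((hpt y).2 hy) hy, fun x => ?_⟩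
  rcases lt_trichotomy (a x) 0 with hx | hx | hx
  · rw [div_mul_eq_mul_div, div_le_iff₀ hy]
    linarith [hsr x y hx hy]
  · simpa [hx] using (hpt x).1 hx.ge
  · calc b y / a y * a x ≤ b x / a x * a x :=
          mul_le_mul_of_nonneg_right (hmin x (by simpa using hx)) hx.le
      _ = b x := div_mul_cancel₀ _ hx.ne'

theorem signPreserving_sum_mul {p : X → ℝ} (hp : ∀ x, 0 ≤ p x) :
    SignPreserving (∑ x, a x * p x) (∑ x, b x * p x) := by
  by_cases hpos : ∃ y, 0 < a y
  · obtain ⟨c, hc, hle⟩ := exists_pos_mul_le_of_signedRatio hpt hsr hpos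
    refine SignPreserving.of_mul_le hc ?_
    rw [Finset.mul_sum]
    refine Finset.sum_le_sum fun x _ => ?_
    rw [← mul_assoc]
    exact mul_le_mul_of_nonneg_right (hle x) (hp x)
  · push Not at hpos
    have hterm : ∀ x ∈ Finset.univ, a x * p x ≤ 0 :=
      fun x _ => mul_nonpos_of_nonpos_of_nonneg (hpos x) (hp x)
    have hsum := Finset.sum_nonpos hterm
    refine ⟨fun h0 => Finset.sum_nonneg fun x _ => ?_, fun h0 => absurd h0 hsum.not_gt⟩
    have hx : a x * p x = 0 :=
      (Finset.sum_eq_zero_iff_of_nonpos hterm).mp (hsum.antisymm h0) x (Finset.mem_univ x)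
    rcases mul_eq_zero.mp hx with hax | hpx
    · exact mul_nonneg ((hpt x).1 hax.ge) (hp x)
    · simp [hpx]

end Converse

theorem forall_isLottery_signPreserving_iff :
    (∀ p, IsLottery p → SignPreserving (∑ x, a x * p x) (∑ x, b x * p x)) ↔
      (∀ x, SignPreserving (a x) (b x)) ∧
        ∀ x y, a x < 0 → 0 < a y → -a x * b y ≥ -b x * a y :=
  ⟨fun h => ⟨signPreserving_of_forall_lottery h, fun _ _ => signedRatio_of_forall_lottery h⟩,
    fun ⟨hpt, hsr⟩ _ hp => signPreserving_sum_mul hpt hsr fun x => (hp.1 x).1⟩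

end Pair

theorem stmt_9_general {Θ X : Type*} [PartialOrder Θ] [Fintype X]
    (f : X × Θ → ℝ) :
    (∀ p : X → ℝ, IsLottery p →
        SingleCrossing (fun θ => ∑ x, f (x, θ) * p x)) ↔
      ((∀ x : X, SingleCrossing (fun θ => f (x, θ))) ∧
        SignedRatioMonotone {φ : Θ → ℝ | ∃ x : X, φ = fun θ => f (x, θ)}) := by
  simp only [singleCrossing_iff, signedRatioMonotone_setOf_eq_iff (fun x θ => f (x, θ))]
  constructor
  · intro h
    have hpair θ θ' (hθ : θ ≤ θ') :=
      forall_isLottery_signPreserving_iff.mp fun p hp => h p hp θ θ' hθ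
    exact ⟨fun x θ θ' hθ => (hpair θ θ' hθ).1 x, fun θ θ' hθ => (hpair θ θ' hθ).2⟩
  · rintro ⟨hpt, hsr⟩ p hp θ θ' hθ
    exact forall_isLottery_signPreserving_iff.mpr ⟨fun x => hpt x θ θ' hθ, hsr θ θ' hθ⟩ p hp

theorem stmt_9 {Θ X : Type*} [PartialOrder Θ] [Nonempty Θ] [Fintype X] [Nonempty X]
    (f : X × Θ → ℝ) :
    (∀ p : X → ℝ, IsLottery p →
        SingleCrossing (fun θ => ∑ x, f (x, θ) * p x)) ↔
      ((∀ x : X, SingleCrossing (fun θ => f (x, θ))) ∧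
        SignedRatioMonotone {φ : Θ → ℝ | ∃ x : X, φ = fun θ => f (x, θ)}) :=
  stmt_9_general f
end

section
/- Let (Θ, ≲) be a nonempty partially ordered set, X a nonempty finite set, and f : X × Θ → ℝ. Suppose that for each x ∈ X the function f(x,·) is single-crossing, and that the family {f(x,·) : x ∈ X} satisfies signed-ratio monotonicity. Then for every lottery p ∈ Δ(X), the map θ ↦ ∑_{x∈X} f(x,θ)·p(x) is single-crossing. -/
open Finset

/-!
Fix `θ ≤ θ'` and write `a x = f (x, θ) p x`, `b x = f (x, θ') p x`. If some `a j` is positive,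
let `r > 0` be the least ratio `b j / a j` over those `j`. Single-crossing gives `r a x ≤ b x`
where `a x ≥ 0`, and signed-ratio monotonicity, compared against the minimising `j`, gives it
where `a x < 0`. Summing, `∑ b ≥ r ∑ a`, so the sign of the expected value can only improve.
If no `a j` is positive, `∑ a ≥ 0` forces every `a x` to vanish, and then every `b x ≥ 0`.
-/

section SignedRatio

variable {ι : Type*} [Fintype ι] {a b : ι → ℝ}

theorem exists_pos_mul_le_of_signedRatio_s10 (hnonneg : ∀ i, 0 ≤ a i → 0 ≤ b i)
    (hpos : ∀ i, 0 < a i → 0 < b i) (hsrm : ∀ i j, a i < 0 → 0 < a j → -a i * b j ≥ -b i * a j)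
    (hex : ∃ j, 0 < a j) : ∃ r > 0, ∀ i, r * a i ≤ b i := by
  obtain ⟨j, hjP, hmin⟩ := (univ.filter (0 < a ·)).exists_min_image (fun j => b j / a j)
    (by simpa [Finset.Nonempty] using hex)
  have hj : 0 < a j := (mem_filter.1 hjP).2
  refine ⟨b j / a j, div_pos (hpos j hj) hj, fun i => ?_⟩
  rcases lt_trichotomy (a i) 0 with hi | hi | hi
  · rw [div_mul_eq_mul_div, div_le_iff₀ hj]
    linarith [hsrm i j hi hj]
  · simpa [hi] using hnonneg i hi.ge
  · exact (le_div_iff₀ hi).1 (hmin i (mem_filter.2 ⟨mem_univ i, hi⟩))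

theorem sum_nonneg_and_sum_pos_of_signedRatio (hnonneg : ∀ i, 0 ≤ a i → 0 ≤ b i)
    (hpos : ∀ i, 0 < a i → 0 < b i) (hsrm : ∀ i j, a i < 0 → 0 < a j → -a i * b j ≥ -b i * a j) :
    (0 ≤ ∑ i, a i → 0 ≤ ∑ i, b i) ∧ (0 < ∑ i, a i → 0 < ∑ i, b i) := by
  by_cases hex : ∃ j, 0 < a j
  · obtain ⟨r, hr, hle⟩ := exists_pos_mul_le_of_signedRatio_s10 hnonneg hpos hsrm hex
    have hsum : r * ∑ i, a i ≤ ∑ i, b i := by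
      rw [mul_sum]
      exact sum_le_sum fun i _ => hle i
    exact ⟨fun h => (mul_nonneg hr.le h).trans hsum, fun h => (mul_pos hr h).trans_le hsum⟩
  · simp only [not_exists, not_lt] at hex
    have hzero : 0 ≤ ∑ i, a i → ∀ i, a i = 0 := fun h i =>
      (sum_eq_zero_iff_of_nonpos fun i _ => hex i).1 (le_antisymm (sum_nonpos fun i _ => hex i) h)
        i (mem_univ i)
    refine ⟨fun h => sum_nonneg fun i _ => hnonneg i (hzero h i).ge, fun h => ?_⟩
    exact absurd h (not_lt.2 (sum_nonpos fun i _ => hex i))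

end SignedRatio

section Weighted

variable {a b p : ℝ}

theorem mul_nonneg_imp_of_imp (hp : 0 ≤ p) (h : 0 ≤ a → 0 ≤ b) (hap : 0 ≤ a * p) :
    0 ≤ b * p := by
  rcases hp.eq_or_lt with rfl | hp
  · simp
  · exact mul_nonneg (h ((mul_nonneg_iff_of_pos_right hp).1 hap)) hp.le

theorem mul_pos_imp_of_imp (hp : 0 ≤ p) (h : 0 < a → 0 < b) (hap : 0 < a * p) :
    0 < b * p := by
  have hp_pos : 0 < p := hp.lt_of_ne (by rintro rfl; simp at hap)
  exact mul_pos (h ((mul_pos_iff_of_pos_right hp_pos).1 hap)) hp_pos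

theorem signedRatio_mul_of_signedRatio {a' b' p' : ℝ} (hp : 0 ≤ p) (hp' : 0 ≤ p')
    (h : a < 0 → 0 < a' → -a * b' ≥ -b * a') (hap : a * p < 0) (hap' : 0 < a' * p') :
    -(a * p) * (b' * p') ≥ -(b * p) * (a' * p') := by
  have hp_pos : 0 < p := hp.lt_of_ne (by rintro rfl; simp at hap)
  have hp'_pos : 0 < p' := hp'.lt_of_ne (by rintro rfl; simp at hap')
  have key := h (neg_of_mul_neg_left hap hp) ((mul_pos_iff_of_pos_right hp'_pos).1 hap')
  calc -(b * p) * (a' * p') = (p * p') * (-b * a') := by ring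
    _ ≤ (p * p') * (-a * b') := mul_le_mul_of_nonneg_left key (mul_pos hp_pos hp'_pos).le
    _ = -(a * p) * (b' * p') := by ring

end Weighted

theorem stmt_10_general {Θ X : Type*} [PartialOrder Θ] [Fintype X]
    (f : X × Θ → ℝ)
    (hsc : ∀ x : X, SingleCrossing (fun θ => f (x, θ)))
    (hsrm : SignedRatioMonotone {φ : Θ → ℝ | ∃ x : X, φ = fun θ => f (x, θ)}) :
    ∀ p : X → ℝ, IsLottery p →
      SingleCrossing (fun θ => ∑ x, f (x, θ) * p x) := by
  intro p hp θ θ' hθ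
  have hp0 : ∀ x, 0 ≤ p x := fun x => (hp.1 x).1
  exact sum_nonneg_and_sum_pos_of_signedRatio
    (fun x => mul_nonneg_imp_of_imp (hp0 x) (hsc x hθ).1)
    (fun x => mul_pos_imp_of_imp (hp0 x) (hsc x hθ).2)
    (fun x y => signedRatio_mul_of_signedRatio (hp0 x) (hp0 y)
      (hsrm _ ⟨x, rfl⟩ _ ⟨y, rfl⟩ hθ))

theorem stmt_10 {Θ X : Type*} [PartialOrder Θ] [Nonempty Θ] [Fintype X] [Nonempty X]
    (f : X × Θ → ℝ)
    (hsc : ∀ x : X, SingleCrossing (fun θ => f (x, θ)))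
    (hsrm : SignedRatioMonotone {φ : Θ → ℝ | ∃ x : X, φ = fun θ => f (x, θ)}) :
    ∀ p : X → ℝ, IsLottery p →
      SingleCrossing (fun θ => ∑ x, f (x, θ) * p x) :=
  stmt_10_general f hsc hsrm
end

section
/- Let (Θ, ≲) be a nonempty partially ordered set, X a nonempty finite set, and f : X × Θ → ℝ. Suppose that for every lottery p ∈ Δ(X), the map θ ↦ ∑_{x∈X} f(x,θ)·p(x) is single-crossing. Then the family {f(x,·) : x ∈ X} satisfies signed-ratio monotonicity. -/
open Finset

lemma sum_mul_pi_single_add_pi_single {X : Type*} [Fintype X] [DecidableEq X]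
    (g : X → ℝ) (x y : X) (a b : ℝ) :
    ∑ z, g z * (Pi.single x a + Pi.single y b : X → ℝ) z = g x * a + g y * b := by
  simp [mul_add, sum_add_distrib, Pi.single_apply]

lemma isLottery_pi_single_add_pi_single {X : Type*} [Fintype X] [DecidableEq X]
    (x y : X) {a b : ℝ} (ha : 0 ≤ a) (hb : 0 ≤ b) (hab : a + b = 1) :
    IsLottery (Pi.single x a + Pi.single y b : X → ℝ) := by
  refine ⟨fun z => ?_, ?_⟩
  · simp only [Pi.add_apply, Pi.single_apply]
    constructor <;> split_ifs <;> linarith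
  · simpa [hab] using sum_mul_pi_single_add_pi_single 1 x y a b

/-- The mixture with weights proportional to `(ψ θ, -φ θ)` vanishes at `θ`; its value at `θ'`
has the sign of `φ θ' * ψ θ - ψ θ' * φ θ`. -/
lemma neg_mul_ge_of_singleCrossing_mixtures {Θ : Type*} [PartialOrder Θ] {φ ψ : Θ → ℝ}
    (h : ∀ a b : ℝ, 0 ≤ a → 0 ≤ b → a + b = 1 → SingleCrossing fun θ => φ θ * a + ψ θ * b)
    {θ θ' : Θ} (hθ : θ ≤ θ') (hφ : φ θ < 0) (hψ : 0 < ψ θ) :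
    -φ θ * ψ θ' ≥ -φ θ' * ψ θ := by
  have hc : 0 < ψ θ - φ θ := by linarith
  have hzero : φ θ * (ψ θ / (ψ θ - φ θ)) + ψ θ * (-φ θ / (ψ θ - φ θ)) = 0 := by
    field_simp; ring
  have hnonneg : φ θ' * (ψ θ / (ψ θ - φ θ)) + ψ θ' * (-φ θ / (ψ θ - φ θ)) ≥ 0 :=
    (h _ _ (div_nonneg hψ.le hc.le) (div_nonneg (by linarith) hc.le)
      (by field_simp; ring) hθ).1 hzero.ge
  rw [show φ θ' * (ψ θ / (ψ θ - φ θ)) + ψ θ' * (-φ θ / (ψ θ - φ θ))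
      = (φ θ' * ψ θ - ψ θ' * φ θ) / (ψ θ - φ θ) by ring] at hnonneg
  linarith [(le_div_iff₀ hc).1 hnonneg]

theorem stmt_11_general {Θ X : Type*} [PartialOrder Θ] [Fintype X]
    (f : X × Θ → ℝ)
    (h : ∀ p : X → ℝ, IsLottery p →
      SingleCrossing (fun θ => ∑ x, f (x, θ) * p x)) :
    SignedRatioMonotone {φ : Θ → ℝ | ∃ x : X, φ = fun θ => f (x, θ)} := by
  classical
  rintro _ ⟨x, rfl⟩ _ ⟨y, rfl⟩ θ θ' hθ
  refine neg_mul_ge_of_singleCrossing_mixtures (φ := fun θ => f (x, θ)) (ψ := fun θ => f (y, θ))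
    (fun a b ha hb hab => ?_) hθ
  simpa only [sum_mul_pi_single_add_pi_single] using
    h _ (isLottery_pi_single_add_pi_single x y ha hb hab)

theorem stmt_11 {Θ X : Type*} [PartialOrder Θ] [Nonempty Θ] [Fintype X] [Nonempty X]
    (f : X × Θ → ℝ)
    (h : ∀ p : X → ℝ, IsLottery p →
      SingleCrossing (fun θ => ∑ x, f (x, θ) * p x)) :
    SignedRatioMonotone {φ : Θ → ℝ | ∃ x : X, φ = fun θ => f (x, θ)} :=
  stmt_11_general f h
end

section
/- Let X be a nonempty finite set and u, v : X → ℝ. Suppose that: (I) for any x, y ∈ X, u(x) ≥ u(y) implies v(x) ≥ v(y), and u(x) > u(y) implies v(x) > v(y); and (II) for any x, y, z ∈ X with u(x) < u(y) < u(z), (u(z) − u(y))/(u(y) − u(x)) ≥ (v(z) − v(y))/(v(y) − v(x)). Then u is less risk-averse than v, i.e. for every y ∈ X and every lottery p ∈ Δ(X): u(y) ≥ ∑_{x∈X} u(x)p(x) implies v(y) ≥ ∑_{x∈X} v(x)p(x), and u(y) > ∑_{x∈X} u(x)p(x) implies v(y) > ∑_{x∈X} v(x)p(x). -/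
open Finset

/-!
Condition (II) says that, viewed as a function of `u`, the utility `v` is concave: chord slopes
from a point `y` to the right of `u y` are at most those to the left. By finiteness there is then a
positive slope `l` of a supporting line at `y`, `v x - v y ≤ l * (u x - u y)` for all `x`.
Averaging this against a lottery `p` gives `E_p v - v y ≤ l * (E_p u - u y)`, so the sign
conditions on `u y - E_p u` transfer to `v y - E_p v`.
-/

lemma IsLottery.sum_mul_sub {X : Type*} [Fintype X] {p : X → ℝ} (hp : IsLottery p)
    (f : X → ℝ) (c : ℝ) : ∑ x, f x * p x - c = ∑ x, (f x - c) * p x := by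
  simp only [sub_mul, sum_sub_distrib, ← mul_sum, hp.2, mul_one]

lemma LessRiskAverse.of_exists_supporting_slope {X : Type*} [Fintype X] {u v : X → ℝ}
    (h : ∀ y, ∃ l > 0, ∀ x, v x - v y ≤ l * (u x - u y)) : LessRiskAverse u v := by
  intro y p hp
  obtain ⟨l, hl, hle⟩ := h y
  have key : ∑ x, v x * p x - v y ≤ l * (∑ x, u x * p x - u y) :=
    calc ∑ x, v x * p x - v y = ∑ x, (v x - v y) * p x := hp.sum_mul_sub v (v y)
      _ ≤ ∑ x, l * (u x - u y) * p x :=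
        sum_le_sum fun x _ => mul_le_mul_of_nonneg_right (hle x) (hp.1 x).1
      _ = l * (∑ x, u x * p x - u y) := by
        simp only [hp.sum_mul_sub u (u y), mul_sum, mul_assoc]
  constructor
  · intro huy
    nlinarith
  · intro huy
    nlinarith

lemma exists_pos_between_finset {S T : Finset ℝ} (hT : ∀ t ∈ T, 0 < t)
    (hST : ∀ s ∈ S, ∀ t ∈ T, s ≤ t) : ∃ l > 0, (∀ s ∈ S, s ≤ l) ∧ ∀ t ∈ T, l ≤ t := by
  rcases T.eq_empty_or_nonempty with rfl | hTne
  · refine ⟨(insert 1 S).max' (insert_nonempty 1 S), ?_, fun s hs => ?_, by simp⟩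
    · exact one_pos.trans_le (le_max' _ 1 (mem_insert_self 1 S))
    · exact le_max' _ s (mem_insert_of_mem hs)
  · refine ⟨T.min' hTne, hT _ (min'_mem T hTne), fun s hs => ?_, fun t ht => min'_le T t ht⟩
    exact le_min' T hTne s fun t ht => hST s hs t ht

section

variable {X : Type*} {u v : X → ℝ}

lemma slope_le_slope_of_ratio_ge
    (hord : ∀ x y : X, (u x ≥ u y → v x ≥ v y) ∧ (u x > u y → v x > v y))
    (hratio : ∀ x y z : X, u x < u y → u y < u z →
      (u z - u y) / (u y - u x) ≥ (v z - v y) / (v y - v x))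
    {x y z : X} (hxy : u x < u y) (hyz : u y < u z) :
    (v z - v y) / (u z - u y) ≤ (v x - v y) / (u x - u y) := by
  have hvxy : 0 < v y - v x := sub_pos.2 ((hord y x).2 hxy)
  have hvyz : 0 < v z - v y := sub_pos.2 ((hord z y).2 hyz)
  have h := hratio x y z hxy hyz
  rw [ge_iff_le, div_le_div_iff₀ hvxy (sub_pos.2 hxy)] at h
  rw [← neg_div_neg_eq (v x - v y), neg_sub, neg_sub,
    div_le_div_iff₀ (sub_pos.2 hyz) (sub_pos.2 hxy)]
  nlinarith

lemma exists_supporting_slope [Fintype X]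
    (hord : ∀ x y : X, (u x ≥ u y → v x ≥ v y) ∧ (u x > u y → v x > v y))
    (hslope : ∀ x y z : X, u x < u y → u y < u z →
      (v z - v y) / (u z - u y) ≤ (v x - v y) / (u x - u y))
    (y : X) : ∃ l > 0, ∀ x, v x - v y ≤ l * (u x - u y) := by
  set s : X → ℝ := fun x => (v x - v y) / (u x - u y)
  obtain ⟨l, hl, hright, hleft⟩ := exists_pos_between_finset
    (S := (univ.filter fun x => u y < u x).image s)
    (T := (univ.filter fun x => u x < u y).image s)
    (by
      simp only [mem_image, mem_filter, mem_univ, true_and, forall_exists_index, and_imp]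
      rintro _ x hx rfl
      exact div_pos_of_neg_of_neg (sub_neg.2 ((hord y x).2 hx)) (sub_neg.2 hx))
    (by
      simp only [mem_image, mem_filter, mem_univ, true_and, forall_exists_index, and_imp]
      rintro _ z hz rfl _ x hx rfl
      exact hslope x y z hx hz)
  refine ⟨l, hl, fun x => ?_⟩
  rcases lt_trichotomy (u x) (u y) with hx | hx | hx
  · have := hleft (s x) (mem_image_of_mem s (by simpa using hx))
    rwa [le_div_iff_of_neg (sub_neg.2 hx)] at this
  · rw [hx, sub_self, mul_zero, sub_nonpos]
    exact (hord y x).1 hx.le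
  · have := hright (s x) (mem_image_of_mem s (by simpa using hx))
    rwa [div_le_iff₀ (sub_pos.2 hx)] at this

end

theorem stmt_13_general {X : Type*} [Fintype X] (u v : X → ℝ)
    (hord : ∀ x y : X, (u x ≥ u y → v x ≥ v y) ∧ (u x > u y → v x > v y))
    (hratio : ∀ x y z : X, u x < u y → u y < u z →
      (u z - u y) / (u y - u x) ≥ (v z - v y) / (v y - v x)) :
    LessRiskAverse u v :=
  .of_exists_supporting_slope <|
    exists_supporting_slope hord fun _ _ _ => slope_le_slope_of_ratio_ge hord hratio

theorem stmt_13 {X : Type*} [Fintype X] [Nonempty X] (u v : X → ℝ)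
    (hord : ∀ x y : X, (u x ≥ u y → v x ≥ v y) ∧ (u x > u y → v x > v y))
    (hratio : ∀ x y z : X, u x < u y → u y < u z →
      (u z - u y) / (u y - u x) ≥ (v z - v y) / (v y - v x)) :
    LessRiskAverse u v :=
  stmt_13_general u v hord hratio
end
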